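/- arXiv:0805.4089 — 3 statements merged into one kernel-verified Lean document; each statement's English description precedes it below -/
import Mathlib

section
/- Let A be a commutative ring, M an additive commutative group, S an additive submonoid of M and f ∈ S. Let T = {g ∈ M | ∃ s ∈ S, ∃ m ∈ ℤ, g = s + m • f}; then T is an additive submonoid of M containing S. The ring homomorphism A[S] → A[T] induced by the inclusion S ⊆ T (taking the monomial single g 1 to single g 1) exhibits A[T] as the localisation of A[S] away from the single element single f 1, i.e., IsLocalization.Away (single f 1) holds for A[T] as an A[S]-algebra. -/
/-! Multiplying an element of `A[T]` by a high enough power of the unit `single f 1` shifts all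
its exponents into `S`, so it becomes the image of an element of `A[S]`; and since `S → T` is
injective, so is `A[S] → A[T]`, hence no element of `A[S]` is killed. -/

section MonoidLocalisation

variable {M : Type*} [AddCommGroup M]

/-- The submonoid `T = {s + m • f | s ∈ S, m ∈ ℤ}` of `M` obtained from `S`
by inverting `f ∈ S`. -/
def invertedSubmonoid (S : AddSubmonoid M) (f : M) (hf : f ∈ S) : AddSubmonoid M where
  carrier := {g : M | ∃ s ∈ S, ∃ m : ℤ, g = s + m • f}
  zero_mem' := ⟨0, S.zero_mem, 0, by simp⟩
  add_mem' := by
    rintro a b ⟨s, hs, m, rfl⟩ ⟨t, ht, l, rfl⟩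
    exact ⟨s + t, S.add_mem hs ht, m + l, by rw [add_zsmul]; abel⟩

section LocalizationAway

variable {R B : Type*} [CommSemiring R] [CommSemiring B] [Algebra R B] (x : R)

theorem exists_add_mul_algebraMap_pow_eq {z w : B}
    (hz : ∃ (n : ℕ) (a : R), z * algebraMap R B x ^ n = algebraMap R B a)
    (hw : ∃ (n : ℕ) (b : R), w * algebraMap R B x ^ n = algebraMap R B b) :
    ∃ (n : ℕ) (c : R), (z + w) * algebraMap R B x ^ n = algebraMap R B c := by
  obtain ⟨n, a, ha⟩ := hz
  obtain ⟨m, b, hb⟩ := hw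
  refine ⟨n + m, a * x ^ m + b * x ^ n, ?_⟩
  rw [map_add, map_mul, map_mul, map_pow, map_pow, ← ha, ← hb]
  ring

end LocalizationAway

namespace AddMonoidAlgebra

variable {R S T : Type*} [CommSemiring R] [AddCommMonoid S] [AddCommMonoid T]

theorem isUnit_single_one {t : T} (ht : IsAddUnit t) : IsUnit (single t (1 : R)) := by
  obtain ⟨u, rfl⟩ := ht
  exact IsUnit.of_mul_eq_one (single ↑(-u) 1) (by simp [one_def])

theorem isLocalization_away_mapDomainRingHom (i : S →+ T) (hi : Function.Injective i) {f : S}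
    (hf : IsAddUnit (i f)) (hT : ∀ t, ∃ n : ℕ, ∃ s, i s = t + n • i f) :
    letI := (mapDomainRingHom R i).toAlgebra
    IsLocalization.Away (single f (1 : R)) R[T] := by
  let := (mapDomainRingHom R i).toAlgebra
  have algebraMap_single (s : S) (a : R) : algebraMap R[S] R[T] (single s a) = single (i s) a := by
    simp [RingHom.algebraMap_toAlgebra]
  refine IsLocalization.Away.mk _ ?_ (fun z ↦ ?_) (fun x y h ↦ ⟨0, ?_⟩)
  · rw [algebraMap_single]
    exact isUnit_single_one hf
  · induction z using induction_linear with
    | zero => exact ⟨0, 0, by simp⟩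
    | add z w hz hw => exact exists_add_mul_algebraMap_pow_eq _ hz hw
    | single t a =>
      obtain ⟨n, s, hs⟩ := hT t
      exact ⟨n, single s a, by simp [algebraMap_single, hs]⟩
  · simpa using mapDomain_injective hi h

end AddMonoidAlgebra

theorem add_nsmul_mem_of_mem_invertedSubmonoid {S : AddSubmonoid M} {f : M} (hf : f ∈ S) {t : M}
    (ht : t ∈ invertedSubmonoid S f hf) : ∃ n : ℕ, t + n • f ∈ S := by
  obtain ⟨s, hs, m, rfl⟩ := ht
  refine ⟨(-m).toNat, ?_⟩
  have : m • f + (-m).toNat • f = m.toNat • f := by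
    rw [← natCast_zsmul, ← natCast_zsmul, ← add_zsmul]
    congr 1
    omega
  rw [add_assoc, this]
  exact S.add_mem hs (S.nsmul_mem hf _)

theorem monoidAlgebra_inverting_is_localisation
    (A : Type*) [CommRing A] (M : Type*) [AddCommGroup M]
    (S : AddSubmonoid M) (f : M) (hf : f ∈ S) :
    -- `T` is a submonoid with the prescribed carrier, containing `S`
    ((invertedSubmonoid S f hf : Set M) = {g : M | ∃ s ∈ S, ∃ m : ℤ, g = s + m • f}) ∧
    ∃ hST : S ≤ invertedSubmonoid S f hf,
      -- and `A[T]` is the localisation of `A[S]` away from `single f 1`,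
      -- via the ring homomorphism induced by the inclusion `S ⊆ T`
      letI : Algebra (AddMonoidAlgebra A S) (AddMonoidAlgebra A (invertedSubmonoid S f hf)) :=
        (AddMonoidAlgebra.mapDomainRingHom A (AddSubmonoid.inclusion hST)).toAlgebra
      IsLocalization.Away (AddMonoidAlgebra.single (⟨f, hf⟩ : S) (1 : A))
        (AddMonoidAlgebra A (invertedSubmonoid S f hf)) := by
  have hST : S ≤ invertedSubmonoid S f hf := fun s hs ↦ ⟨s, hs, 0, by simp⟩
  have hneg : -f ∈ invertedSubmonoid S f hf := ⟨0, S.zero_mem, -1, by simp⟩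
  have hunit : IsAddUnit (AddSubmonoid.inclusion hST ⟨f, hf⟩) :=
    ⟨⟨_, ⟨-f, hneg⟩, Subtype.ext (add_neg_cancel f), Subtype.ext (neg_add_cancel f)⟩, rfl⟩
  refine ⟨rfl, hST, AddMonoidAlgebra.isLocalization_away_mapDomainRingHom _
    (AddSubmonoid.inclusion_injective hST) hunit fun t ↦ ?_⟩
  obtain ⟨n, hn⟩ := add_nsmul_mem_of_mem_invertedSubmonoid hf t.2
  exact ⟨n, ⟨_, hn⟩, rfl⟩

end MonoidLocalisation
end

section
/- Let d be a positive integer, N = ℤ^d, M = Hom_ℤ(N, ℤ). Let n_1, …, n_m ∈ N and k, ℓ ∈ ℤ^m, and suppose there exist f_k, f_ℓ ∈ M with f_k(n_i) = −k_i and f_ℓ(n_i) = −ℓ_i for all i. Then the pointwise sum set satisfies B(k) + B(ℓ) = B(k + ℓ), where B(k) = {g ∈ M | g(n_i) ≥ −k_i for all i} and similarly for B(ℓ) and B(k+ℓ). -/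
open Pointwise

/- An `f` with `f(nᵢ) = -kᵢ` lies in `B(k)`, and any `g ∈ B(k + ℓ)` splits as
`f + (g - f)` with `g - f ∈ B(ℓ)`; the reverse inclusion is the sum of the defining
inequalities. -/

section LineBundleBasis

variable {R N ι : Type*} [CommRing R] [PartialOrder R] [AddCommGroup N] [Module R N]

/-- The monomial basis `B(k)` of `O(k)` for the rays `n i`. -/
def lineBundleBasis (n : ι → N) (k : ι → R) : Set (Module.Dual R N) :=
  {g | ∀ i, -(k i) ≤ g (n i)}

variable {n : ι → N} {k l : ι → R}

theorem lineBundleBasis_add_subset [IsOrderedAddMonoid R] :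
    lineBundleBasis n k + lineBundleBasis n l ⊆ lineBundleBasis n (k + l) := by
  rintro _ ⟨a, ha, b, hb, rfl⟩ i
  rw [Pi.add_apply, neg_add, LinearMap.add_apply]
  exact add_le_add (ha i) (hb i)

theorem mem_lineBundleBasis_of_eval_eq {f : Module.Dual R N} (hf : ∀ i, f (n i) = -(k i)) :
    f ∈ lineBundleBasis n k :=
  fun i => (hf i).ge

theorem sub_mem_lineBundleBasis [IsOrderedAddMonoid R] {f g : Module.Dual R N}
    (hf : ∀ i, f (n i) = -(k i)) (hg : g ∈ lineBundleBasis n (k + l)) :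
    g - f ∈ lineBundleBasis n l := by
  intro i
  rw [LinearMap.sub_apply, le_sub_iff_add_le, hf i, ← neg_add, add_comm]
  exact hg i

theorem lineBundleBasis_add_eq [IsOrderedAddMonoid R] {f : Module.Dual R N}
    (hf : ∀ i, f (n i) = -(k i)) :
    lineBundleBasis n k + lineBundleBasis n l = lineBundleBasis n (k + l) := by
  refine lineBundleBasis_add_subset.antisymm fun g hg => ?_
  exact ⟨f, mem_lineBundleBasis_of_eval_eq hf, g - f, sub_mem_lineBundleBasis hf hg,
    add_sub_cancel f g⟩

end LineBundleBasis

theorem lineBundle_bases_add_general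
    (d m : ℕ) (n : Fin m → (Fin d → ℤ)) (k l : Fin m → ℤ)
    (fk : Module.Dual ℤ (Fin d → ℤ))
    (hfk : ∀ i, fk (n i) = -(k i)) :
    ({g : Module.Dual ℤ (Fin d → ℤ) | ∀ i : Fin m, -(k i) ≤ g (n i)}
        + {g : Module.Dual ℤ (Fin d → ℤ) | ∀ i : Fin m, -(l i) ≤ g (n i)})
      = {g : Module.Dual ℤ (Fin d → ℤ) | ∀ i : Fin m, -(k i + l i) ≤ g (n i)} :=
  lineBundleBasis_add_eq hfk

theorem lineBundle_bases_add
    (d m : ℕ) (hd : 0 < d) (n : Fin m → (Fin d → ℤ)) (k l : Fin m → ℤ)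
    (fk fl : Module.Dual ℤ (Fin d → ℤ))
    (hfk : ∀ i, fk (n i) = -(k i)) (hfl : ∀ i, fl (n i) = -(l i)) :
    ({g : Module.Dual ℤ (Fin d → ℤ) | ∀ i : Fin m, -(k i) ≤ g (n i)}
        + {g : Module.Dual ℤ (Fin d → ℤ) | ∀ i : Fin m, -(l i) ≤ g (n i)})
      = {g : Module.Dual ℤ (Fin d → ℤ) | ∀ i : Fin m, -(k i + l i) ≤ g (n i)} :=
  lineBundle_bases_add_general d m n k l fk hfk
end

section
/- Let M' be an additive commutative monoid, A a commutative ring, and v : M' → ℕ an additive monoid homomorphism. Let M'₀ = {m ∈ M' | v(m) = 0}, an additive submonoid of M'. Then the A-linear map π : A[M'] → A[M'₀] determined on monomials by π(single m a) = single m a if v(m) = 0 and π(single m a) = 0 otherwise is a surjective A-algebra homomorphism, and its kernel is the ideal of A[M'] generated by the set of monomials {single m 1 | m ∈ M', v(m) > 0}. -/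
/-!
The projection `π` is the algebra map induced by the monoid homomorphism sending `m` to the
monomial `m` of `A[M'₀]` if `v m = 0` and to `0` otherwise. It is multiplicative because `M'₀`
is saturated: `v (a + b) = 0` forces `v a = v b = 0`. On coefficients `π` is just restriction
to `M'₀`, so it is split by the inclusion `A[M'₀] → A[M']`, and its kernel consists of the
elements supported outside `M'₀`; by saturation again, a monomial lies in the ideal generated by
the monomials outside `M'₀` exactly when it is itself outside `M'₀`.
-/

section ValuationProjection

variable {M' : Type*} [AddCommMonoid M']

/-- The submonoid `M'₀ = {m ∈ M' | v(m) = 0}` of elements of valuation zero. -/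
def valuationZeroSubmonoid (v : M' →+ ℕ) : AddSubmonoid M' where
  carrier := {m : M' | v m = 0}
  zero_mem' := by simp
  add_mem' := by
    intro a b ha hb
    simp only [Set.mem_setOf_eq, map_add] at *
    omega

namespace AddMonoidAlgebra

variable {R M : Type*} [CommSemiring R] [AddMonoid M] {S : AddSubmonoid M}

open Classical in
noncomputable def comapSubtypeAlgHom (hS : S.AddSaturated) :
    AddMonoidAlgebra R M →ₐ[R] AddMonoidAlgebra R S :=
  lift R _ M
    { toFun m := if h : m.toAdd ∈ S then single ⟨m.toAdd, h⟩ 1 else 0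
      map_one' := by simp only [toAdd_one, dif_pos S.zero_mem]; rfl
      map_mul' x y := by
        by_cases hxy : x.toAdd + y.toAdd ∈ S
        · obtain ⟨hx, hy⟩ := hS hxy
          simp [hxy, hx, hy, single_mul_single]
        · simp only [toAdd_mul, dif_neg hxy]
          by_cases hx : x.toAdd ∈ S
          · have hy : y.toAdd ∉ S := fun hy ↦ hxy (add_mem hx hy)
            simp [hx, hy]
          · simp [hx] }

variable (hS : S.AddSaturated)

theorem comapSubtypeAlgHom_single_of_mem {m : M} (hm : m ∈ S) (r : R) :
    comapSubtypeAlgHom hS (single m r) = single ⟨m, hm⟩ r := by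
  simp [comapSubtypeAlgHom, hm, smul_single]

theorem comapSubtypeAlgHom_single_of_notMem {m : M} (hm : m ∉ S) (r : R) :
    comapSubtypeAlgHom hS (single m r) = 0 := by
  simp [comapSubtypeAlgHom, hm]

theorem coeff_comapSubtypeAlgHom (x : AddMonoidAlgebra R M) (s : S) :
    (comapSubtypeAlgHom hS x).coeff s = x.coeff s := by
  classical
  induction x using induction_linear with
  | zero => simp
  | add x y hx hy => simp [hx, hy]
  | single m r =>
    by_cases hm : m ∈ S
    · simp [comapSubtypeAlgHom_single_of_mem hS hm, Finsupp.single_apply, Subtype.ext_iff]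
    · have : m ≠ s := fun h ↦ hm (h ▸ s.2)
      simp [comapSubtypeAlgHom_single_of_notMem hS hm, this]

theorem comapSubtypeAlgHom_surjective :
    Function.Surjective (comapSubtypeAlgHom (R := R) hS) := by
  intro y
  induction y using induction_linear with
  | zero => exact ⟨0, map_zero _⟩
  | add y z hy hz =>
    obtain ⟨y', rfl⟩ := hy
    obtain ⟨z', rfl⟩ := hz
    exact ⟨y' + z', map_add _ _ _⟩
  | single s r => exact ⟨single s r, comapSubtypeAlgHom_single_of_mem hS s.2 r⟩

theorem mem_ker_comapSubtypeAlgHom {x : AddMonoidAlgebra R M} :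
    x ∈ RingHom.ker (comapSubtypeAlgHom hS) ↔ ∀ m ∈ S, x.coeff m = 0 := by
  rw [RingHom.mem_ker, ← coeff_inj]
  simp [Finsupp.ext_iff, coeff_comapSubtypeAlgHom]

theorem ker_comapSubtypeAlgHom :
    RingHom.ker (comapSubtypeAlgHom (R := R) hS) = Ideal.span (of' R M '' (S : Set M)ᶜ) := by
  ext x
  rw [mem_ker_comapSubtypeAlgHom, mem_ideal_span_of'_image]
  constructor
  · intro hx m hm
    exact ⟨m, fun hmS ↦ Finsupp.mem_support_iff.mp hm (hx m hmS), 0, (zero_add m).symm⟩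
  · rintro hx m hmS
    by_contra hm
    obtain ⟨m', hm', d, rfl⟩ := hx m (Finsupp.mem_support_iff.mpr hm)
    exact hm' (hS hmS).2

end AddMonoidAlgebra

@[simp]
theorem mem_valuationZeroSubmonoid {v : M' →+ ℕ} {m : M'} :
    m ∈ valuationZeroSubmonoid v ↔ v m = 0 :=
  Iff.rfl

theorem valuationZeroSubmonoid_addSaturated (v : M' →+ ℕ) :
    (valuationZeroSubmonoid v).AddSaturated := by
  intro a b hab
  simp only [mem_valuationZeroSubmonoid, map_add] at hab ⊢
  omega

theorem monoidAlgebra_valuation_projection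
    (A : Type*) [CommRing A] (M' : Type*) [AddCommMonoid M'] (v : M' →+ ℕ) :
    (∀ m : M', m ∈ valuationZeroSubmonoid v ↔ v m = 0) ∧
    ∃ π : AddMonoidAlgebra A M' →ₐ[A] AddMonoidAlgebra A (valuationZeroSubmonoid v),
      -- `π` is determined on monomials:
      (∀ (m : M') (hm : m ∈ valuationZeroSubmonoid v) (a : A),
        π (AddMonoidAlgebra.single m a)
          = AddMonoidAlgebra.single (⟨m, hm⟩ : valuationZeroSubmonoid v) a) ∧
      (∀ (m : M') (a : A), v m ≠ 0 → π (AddMonoidAlgebra.single m a) = 0) ∧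
      -- `π` is surjective
      Function.Surjective π ∧
      -- and its kernel is generated by the monomials of positive valuation
      RingHom.ker (π : AddMonoidAlgebra A M' →+* AddMonoidAlgebra A (valuationZeroSubmonoid v))
        = Ideal.span {x : AddMonoidAlgebra A M' |
            ∃ m : M', 0 < v m ∧ x = AddMonoidAlgebra.single m (1 : A)} := by
  have hS := valuationZeroSubmonoid_addSaturated v
  refine ⟨fun _ ↦ mem_valuationZeroSubmonoid, AddMonoidAlgebra.comapSubtypeAlgHom hS,
    fun m hm a ↦ AddMonoidAlgebra.comapSubtypeAlgHom_single_of_mem hS hm a,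
    fun m a hm ↦ AddMonoidAlgebra.comapSubtypeAlgHom_single_of_notMem hS hm a,
    AddMonoidAlgebra.comapSubtypeAlgHom_surjective hS, ?_⟩
  rw [RingHom.ker_coe_toRingHom, AddMonoidAlgebra.ker_comapSubtypeAlgHom]
  congr 1
  ext x
  simp [AddMonoidAlgebra.of'_apply, eq_comm, Nat.pos_iff_ne_zero]

end ValuationProjection
end
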